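/- arXiv:1411.4949 — 2 statements merged into one kernel-verified Lean document; each statement's English description precedes it below -/
import Mathlib

section
/- (Lemma 3, part 3) Consider a voter with strict preference order ≻ and uncertainty level r ≥ 0, with current vote a in state s. If a ∉ W_r(s), then the response set g(a,s) contains exactly one candidate; hence in this case weak LD and strict LD behavior coincide. -/
/-- The multiplicative distance between two (positive) score vectors. -/
noncomputable def multDist {M : Type*} [Fintype M] [Nonempty M] (s s' : M → ℝ) : ℝ :=
  Finset.univ.sup' Finset.univ_nonempty (fun c => max (s' c / s c) (s c / s' c) - 1)

/-- The uncertainty set `S(s,r)`: candidate-wise multiplicative interval around `s`. -/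
def uncSet {M : Type*} (s : M → ℝ) (r : ℝ) : Set (M → ℝ) :=
  {s' | ∀ c, s c / (1 + r) ≤ s' c ∧ s' c ≤ s c * (1 + r)}

/-- The set of possible winners `W_r(s)`. -/
def possWinners {M : Type*} (s : M → ℝ) (r : ℝ) : Set M :=
  {c | ∃ s' ∈ uncSet s r, ∀ a, s' a ≤ s' c}

open Classical in
/-- The perceived outcome `f(s',Q,c)` when voting `c`, under tie-breaker `Q`. -/
noncomputable def outcome {M : Type*} [Fintype M] [Nonempty M]
    (Q : LinearOrder M) (s' : M → ℝ) (c : M) : M :=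
  if ∀ a, s' a ≤ s' c then c
  else
    @Finset.min' M Q (Finset.univ.filter (fun x => ∀ a, s' a ≤ s' x))
      (by
        obtain ⟨b, _, hb⟩ :=
          Finset.exists_max_image (Finset.univ : Finset M) s' Finset.univ_nonempty
        exact ⟨b, Finset.mem_filter.mpr
          ⟨Finset.mem_univ b, fun a => hb a (Finset.mem_univ a)⟩⟩)

/-- `a` `S(s,r)`-beats `b` for a voter with preference order `P`. -/
def beats {M : Type*} [Fintype M] [Nonempty M]
    (P : LinearOrder M) (r : ℝ) (s : M → ℝ) (a b : M) : Prop :=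
  ∃ s' ∈ uncSet s r, ∃ Q : LinearOrder M, P.lt (outcome Q s' b) (outcome Q s' a)

/-- `a` `S(s,r)`-dominates `b`. -/
def dominates {M : Type*} [Fintype M] [Nonempty M]
    (P : LinearOrder M) (r : ℝ) (s : M → ℝ) (a b : M) : Prop :=
  beats P r s a b ∧ ¬ beats P r s b a

/-- `D(s,a)`: candidates that `S(s,r)`-dominate the current vote `a`
and are themselves not `S(s,r)`-dominated. -/
def Dset {M : Type*} [Fintype M] [Nonempty M]
    (P : LinearOrder M) (r : ℝ) (s : M → ℝ) (a : M) : Set M :=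
  {c | dominates P r s c a ∧ ∀ d, ¬ dominates P r s d c}

open Classical in
/-- The response set `g(a,s)` of a weak LD voter. -/
noncomputable def responseSet {M : Type*} [Fintype M] [Nonempty M]
    (P : LinearOrder M) (r : ℝ) (s : M → ℝ) (a : M) : Set M :=
  if Dset P r s a = ∅ then {a} else Dset P r s a

/-- `u` is a cardinal utility scale fitting the preference order `P`. -/
def fits {M : Type*} (P : LinearOrder M) (u : M → ℝ) : Prop :=
  ∀ a b, P.lt b a → u b < u a

/-- The regret for voting `b` under score vector `s'` and tie-breaker `Q`. -/
noncomputable def regret {M : Type*} [Fintype M] [Nonempty M]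
    (u : M → ℝ) (Q : LinearOrder M) (s' : M → ℝ) (b : M) : ℝ :=
  Finset.univ.sup' Finset.univ_nonempty (fun c => u (outcome Q s' c)) - u (outcome Q s' b)

/-- The worst-case regret `WCR_r(s,b)`. -/
noncomputable def WCR {M : Type*} [Fintype M] [Nonempty M]
    (u : M → ℝ) (r : ℝ) (s : M → ℝ) (b : M) : ℝ :=
  sSup {x | ∃ s' ∈ uncSet s r, ∃ Q : LinearOrder M, x = regret u Q s' b}

open Classical in
/-- The score vector of an action profile (unit-weight voters). -/
noncomputable def score {M : Type*} {I : Type*} [Fintype I] (a : I → M) (c : M) : ℝ :=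
  ((Finset.univ.filter (fun i => a i = c)).card : ℝ)

open Classical in
/-- The score vector of an action profile with voter weights `w`. -/
noncomputable def wscore {M : Type*} {I : Type*} [Fintype I]
    (w : I → ℝ) (a : I → M) (c : M) : ℝ :=
  ∑ i ∈ Finset.univ.filter (fun i => a i = c), w i

/-- A valid step of the weak LD dynamics: every voter either keeps her vote
or makes a weak LD move. -/
def validStep {M : Type*} [Fintype M] [Nonempty M] {I : Type*} [Fintype I]
    (P : I → LinearOrder M) (r : I → ℝ) (a a'' : I → M) : Prop :=
  ∀ i, a'' i = a i ∨ (a'' i ∈ Dset (P i) (r i) (score a) (a i) ∧ a'' i ≠ a i)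

/-- The truthful profile: every voter votes for her most preferred candidate. -/
def truthful {M : Type*} {I : Type*} (P : I → LinearOrder M) (a : I → M) : Prop :=
  ∀ i c, (P i).le c (a i)

section Aux

open Classical

variable {M : Type*} [Fintype M] [Nonempty M]

lemma wBound {s : M → ℝ} {r : ℝ} {c : M} (hc : c ∈ possWinners s r) (x : M) :
    s x / (1 + r) ≤ s c * (1 + r) := by
  obtain ⟨s', hs', hmax⟩ := hc
  exact le_trans (hs' x).1 (le_trans (hmax x) (hs' c).2)

/-- A score vector where `c` and `t` are tied at the top. -/
noncomputable def pv (s : M → ℝ) (r : ℝ) (c t : M) : M → ℝ :=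
  fun x => if x = c ∨ x = t then min (s c * (1 + r)) (s t * (1 + r)) else s x / (1 + r)

lemma pv_mem {s : M → ℝ} {r : ℝ} (hr : 0 ≤ r) (hs : ∀ x, 0 ≤ s x) {c t : M}
    (hc : c ∈ possWinners s r) (ht : t ∈ possWinners s r) :
    pv s r c t ∈ uncSet s r := by
  have hr1 : (1:ℝ) ≤ 1 + r := by linarith
  intro x
  unfold pv
  split_ifs with h
  · rcases h with h | h <;> subst h
    · exact ⟨le_min (wBound hc x) (wBound ht x),
        min_le_left _ _⟩
    · exact ⟨le_min (wBound hc x) (wBound ht x),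
        min_le_right _ _⟩
  · exact ⟨le_refl _, le_trans (div_le_self (hs x) hr1) (le_mul_of_one_le_right (hs x) hr1)⟩

lemma pv_max_left {s : M → ℝ} {r : ℝ} {c t : M}
    (hc : c ∈ possWinners s r) (ht : t ∈ possWinners s r) (x : M) :
    pv s r c t x ≤ pv s r c t c := by
  unfold pv
  rw [if_pos (Or.inl rfl)]
  split_ifs with h
  · exact le_refl _
  · exact le_min (wBound hc x) (wBound ht x)

lemma pv_max_right {s : M → ℝ} {r : ℝ} {c t : M}
    (hc : c ∈ possWinners s r) (ht : t ∈ possWinners s r) (x : M) :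
    pv s r c t x ≤ pv s r c t t := by
  unfold pv
  rw [if_pos (Or.inr rfl)]
  split_ifs with h
  · exact le_refl _
  · exact le_min (wBound hc x) (wBound ht x)

lemma outcome_eq_self (Q : LinearOrder M) {s' : M → ℝ} {c : M} (h : ∀ x, s' x ≤ s' c) :
    outcome Q s' c = c := by
  unfold outcome; rw [if_pos h]

lemma outcome_eq_of_not_max (Q : LinearOrder M) {s' : M → ℝ} {b b' : M}
    (hb : ¬ ∀ x, s' x ≤ s' b) (hb' : ¬ ∀ x, s' x ≤ s' b') :
    outcome Q s' b = outcome Q s' b' := by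
  unfold outcome; rw [if_neg hb, if_neg hb']

lemma outcome_mem_possWinners {s : M → ℝ} {r : ℝ} {s' : M → ℝ} (hs' : s' ∈ uncSet s r)
    (Q : LinearOrder M) (b : M) : outcome Q s' b ∈ possWinners s r := by
  unfold outcome
  split_ifs with h
  · exact ⟨s', hs', h⟩
  · have hm := @Finset.min'_mem M Q _ (by
      obtain ⟨c, _, hc⟩ :=
        Finset.exists_max_image (Finset.univ : Finset M) s' Finset.univ_nonempty
      exact ⟨c, Finset.mem_filter.mpr ⟨Finset.mem_univ c, fun x => hc x (Finset.mem_univ x)⟩⟩)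
    rw [Finset.mem_filter] at hm
    exact ⟨s', hs', hm.2⟩

/-- A tie-breaking order in which `t` is least. -/
noncomputable def tOrd (t : M) : LinearOrder M :=
  LinearOrder.lift' (fun x => if x = t then 0 else ((Fintype.equivFin M) x).val + 1)
    (by
      intro x y h
      dsimp only at h
      by_cases hx : x = t <;> by_cases hy : y = t
      · rw [hx, hy]
      · rw [if_pos hx, if_neg hy] at h
        exact absurd h.symm (Nat.succ_ne_zero _)
      · rw [if_neg hx, if_pos hy] at h
        exact absurd h (Nat.succ_ne_zero _)
      · rw [if_neg hx, if_neg hy] at h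
        exact (Fintype.equivFin M).injective (Fin.val_injective (Nat.succ_injective h)))

lemma tOrd_le (t x : M) : (tOrd t).le t x := by
  show (if t = t then 0 else _) ≤ (if x = t then 0 else _)
  rw [if_pos rfl]
  exact Nat.zero_le _

lemma outcome_tOrd {s' : M → ℝ} {t b : M} (ht : ∀ x, s' x ≤ s' t)
    (hb : ¬ ∀ x, s' x ≤ s' b) : outcome (tOrd t) s' b = t := by
  unfold outcome
  rw [if_neg hb]
  have htm : t ∈ Finset.univ.filter (fun x => ∀ y, s' y ≤ s' x) :=
    Finset.mem_filter.mpr ⟨Finset.mem_univ t, ht⟩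
  refine @le_antisymm M (tOrd t).toPartialOrder _ _ ?_ ?_
  · exact @Finset.min'_le M (tOrd t) _ t htm
  · exact @Finset.le_min' M (tOrd t) _ _ t (fun y _ => tOrd_le t y)

end Aux

/-- Lemma 3, part 3: if the current vote is not a possible winner,
then the response set contains exactly one candidate. -/
theorem responseSet_singleton_of_not_possWinner {M : Type*} [Fintype M] [Nonempty M]
    (P : LinearOrder M) (r : ℝ) (hr : 0 ≤ r)
    (s : M → ℝ) (hs : ∀ c, 0 ≤ s c)
    (a : M) (ha : a ∉ possWinners s r) :
    ∃ c, responseSet P r s a = {c} := by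
  classical
  have pirr : ∀ x : M, ¬ P.lt x x := fun x => @lt_irrefl M P.toPreorder x
  have pne : ∀ {x y : M}, P.le x y → x ≠ y → P.lt x y :=
    fun h hne => @lt_of_le_of_ne M P.toPartialOrder _ _ h hne
  have ptrans : ∀ {x y z : M}, P.lt x y → P.le y z → P.lt x z :=
    fun h h' => @lt_of_lt_of_le M P.toPreorder _ _ _ h h'
  have hanm : ∀ s' ∈ uncSet s r, ¬ ∀ x, s' x ≤ s' a := by
    intro s' hs' h
    exact ha ⟨s', hs', h⟩
  by_cases h1 : ∃ c t, c ∈ possWinners s r ∧ t ∈ possWinners s r ∧ c ≠ t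
  · -- at least two possible winners
    obtain ⟨c0, t0, hc0, ht0, hct⟩ := h1
    set Wf : Finset M := Finset.univ.filter (· ∈ possWinners s r) with hWf
    have hWne : Wf.Nonempty := ⟨c0, Finset.mem_filter.mpr ⟨Finset.mem_univ _, hc0⟩⟩
    set cs : M := @Finset.max' M P Wf hWne with hcs
    have hcsW : cs ∈ possWinners s r := by
      have := @Finset.max'_mem M P Wf hWne
      rw [Finset.mem_filter] at this; exact this.2
    have hle : ∀ x ∈ possWinners s r, P.le x cs := fun x hx =>
      @Finset.le_max' M P Wf x (Finset.mem_filter.mpr ⟨Finset.mem_univ _, hx⟩)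
    -- there is another possible winner below cs
    obtain ⟨t', ht'W, ht'ne⟩ : ∃ t', t' ∈ possWinners s r ∧ t' ≠ cs := by
      by_cases h : c0 = cs
      · exact ⟨t0, ht0, by rw [← h]; exact fun e => hct e.symm⟩
      · exact ⟨c0, hc0, h⟩
    have ht'lt : P.lt t' cs := pne (hle t' ht'W) ht'ne
    -- cs beats every d ≠ cs
    have hbeats : ∀ d, d ≠ cs → beats P r s cs d := by
      intro d hd
      refine ⟨pv s r cs t', pv_mem hr hs hcsW ht'W, tOrd t', ?_⟩
      rw [outcome_eq_self _ (pv_max_left hcsW ht'W)]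
      by_cases hdm : ∀ x, pv s r cs t' x ≤ pv s r cs t' d
      · rw [outcome_eq_self _ hdm]
        exact pne (hle d ⟨_, pv_mem hr hs hcsW ht'W, hdm⟩) hd
      · rw [outcome_tOrd (pv_max_right hcsW ht'W) hdm]
        exact ht'lt
    -- a does not beat cs
    have hnba : ¬ beats P r s a cs := by
      rintro ⟨s', hs', Q, hlt⟩
      by_cases hm : ∀ x, s' x ≤ s' cs
      · rw [outcome_eq_self _ hm] at hlt
        have := hle _ (outcome_mem_possWinners hs' Q a)
        exact absurd (ptrans hlt this) (pirr cs)
      · rw [outcome_eq_of_not_max Q hm (hanm s' hs')] at hlt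
        exact pirr _ hlt
    -- cs is in the D-set
    have hcsD : cs ∈ Dset P r s a := by
      refine ⟨⟨hbeats a (fun e => ha (e ▸ hcsW)), hnba⟩, ?_⟩
      rintro d ⟨hbd, hnbd⟩
      by_cases hd : d = cs
      · subst hd
        obtain ⟨s', hs', Q, hlt⟩ := hbd
        exact pirr _ hlt
      · exact hnbd (hbeats d hd)
    -- the D-set is exactly {cs}
    have hDeq : Dset P r s a = {cs} := by
      apply Set.eq_singleton_iff_unique_mem.mpr
      refine ⟨hcsD, ?_⟩
      rintro c ⟨⟨⟨s', hs', Q, hlt⟩, hnbac⟩, _⟩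
      by_cases hcm : ∀ x, s' x ≤ s' c
      · -- c is a possible winner
        have hcW : c ∈ possWinners s r := ⟨s', hs', hcm⟩
        by_contra hne
        apply hnbac
        refine ⟨pv s r c cs, pv_mem hr hs hcW hcsW, tOrd cs, ?_⟩
        rw [outcome_eq_self _ (pv_max_left hcW hcsW),
          outcome_tOrd (pv_max_right hcW hcsW)
            (hanm _ (pv_mem hr hs hcW hcsW))]
        exact pne (hle c hcW) hne
      · rw [outcome_eq_of_not_max Q (hanm s' hs') hcm] at hlt
        exact absurd hlt (pirr _)
    refine ⟨cs, ?_⟩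
    rw [responseSet, if_neg (by rw [hDeq]; exact Set.singleton_ne_empty cs)]
    exact hDeq
  · -- at most one possible winner: nobody dominates a
    refine ⟨a, ?_⟩
    rw [responseSet, if_pos]
    ext c
    simp only [Set.mem_empty_iff_false, iff_false]
    rintro ⟨⟨⟨s', hs', Q, hlt⟩, _⟩, _⟩
    exact h1 ⟨outcome Q s' c, outcome Q s' a,
      outcome_mem_possWinners hs' Q c, outcome_mem_possWinners hs' Q a,
      fun e => pirr _ (e ▸ hlt)⟩
end

section
/- (Proposition 2(B)) Consider a population in which all voters are weak LD voters with the same uncertainty level r ≥ 0, and a sequence a^0, a^1, …, a^T of action profiles in which every consecutive pair is a valid step and a^0 is the truthful profile. Then the score of the winner is non-decreasing: max_{c ∈ M} s_{a^{t+1}}(c) ≥ max_{c ∈ M} s_{a^t}(c) for all t < T. -/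
/-! ### Auxiliary machinery -/

section Aux

variable {M : Type*} [Fintype M] [Nonempty M]
set_option linter.unusedSectionVars false

/-- Max score. -/
noncomputable def msup (s : M → ℝ) : ℝ := Finset.univ.sup' Finset.univ_nonempty s

lemma le_msup (s : M → ℝ) (x : M) : s x ≤ msup s :=
  Finset.le_sup' s (Finset.mem_univ x)

lemma msup_le {s : M → ℝ} {b : ℝ} (h : ∀ x, s x ≤ b) : msup s ≤ b :=
  Finset.sup'_le _ _ fun x _ => h x

lemma exists_msup (s : M → ℝ) : ∃ b, msup s = s b := by
  obtain ⟨b, -, hb⟩ := Finset.exists_mem_eq_sup' (Finset.univ_nonempty (α := M)) s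
  exact ⟨b, hb⟩

/-- A linear order with `w` as least element. -/
noncomputable def leastOrder [DecidableEq M] (w : M) : LinearOrder M :=
  LinearOrder.lift' (fun z => if z = w then 0 else ((Fintype.equivFin M) z : ℕ) + 1) (by
    intro a b hab
    by_cases ha : a = w <;> by_cases hb : b = w <;> simp [ha, hb] at hab <;> try simp [ha, hb]
    · exact (Fintype.equivFin M).injective (Fin.ext hab))

lemma leastOrder_le [DecidableEq M] (w z : M) : (leastOrder w).le w z := by
  show (if w = w then 0 else _) ≤ _
  simp

lemma min'_leastOrder [DecidableEq M] (w : M) (S : Finset M) (hS : S.Nonempty)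
    (hw : w ∈ S) : @Finset.min' M (leastOrder w) S hS = w := by
  refine @le_antisymm M (@LinearOrder.toPartialOrder M (leastOrder w)) _ _ ?_ ?_
  · exact @Finset.min'_le M (leastOrder w) S w hw
  · exact @Finset.le_min' M (leastOrder w) S hS w (fun y _ => leastOrder_le w y)

lemma outcome_max (Q : LinearOrder M) (s' : M → ℝ) (c : M) (h : ∀ a, s' a ≤ s' c) :
    outcome Q s' c = c := by
  rw [outcome, if_pos h]

lemma outcome_nonmax_eq (Q : LinearOrder M) (s' : M → ℝ) (x y : M)
    (hx : ¬ ∀ a, s' a ≤ s' x) (hy : ¬ ∀ a, s' a ≤ s' y) :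
    outcome Q s' x = outcome Q s' y := by
  rw [outcome, outcome, if_neg hx, if_neg hy]

lemma outcome_nonmax_spec (Q : LinearOrder M) (s' : M → ℝ) (x : M)
    (hx : ¬ ∀ a, s' a ≤ s' x) :
    ∃ w, outcome Q s' x = w ∧ ∀ a, s' a ≤ s' w := by
  classical
  rw [outcome, if_neg hx]
  have hne : (Finset.univ.filter (fun z : M => ∀ a, s' a ≤ s' z)).Nonempty := by
    obtain ⟨b, -, hb⟩ := Finset.exists_max_image (Finset.univ : Finset M) s' Finset.univ_nonempty
    exact ⟨b, Finset.mem_filter.mpr ⟨Finset.mem_univ b, fun a => hb a (Finset.mem_univ a)⟩⟩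
  refine ⟨_, rfl, ?_⟩
  exact (Finset.mem_filter.mp (@Finset.min'_mem M Q _ hne)).2

/-- From a maximizer of an uncertainty-set vector, extract possible-winner bound. -/
lemma pw_of_max {r : ℝ} (hr : 0 ≤ r) {s s' : M → ℝ} (hs' : s' ∈ uncSet s r) {z : M}
    (hz : ∀ a, s' a ≤ s' z) : msup s ≤ s z * ((1 + r) * (1 + r)) := by
  have hρ : (0:ℝ) < 1 + r := by linarith
  refine msup_le fun x => ?_
  have h1 : s x ≤ s' x * (1 + r) := (div_le_iff₀ hρ).mp (hs' x).1
  have h2 : s' x ≤ s' z := hz x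
  have h3 : s' z ≤ s z * (1 + r) := (hs' z).2
  calc s x ≤ s' x * (1 + r) := h1
    _ ≤ (s z * (1 + r)) * (1 + r) := by
        apply mul_le_mul_of_nonneg_right (le_trans h2 h3) (le_of_lt hρ)
    _ = s z * ((1 + r) * (1 + r)) := by ring

/-- Destructuring `beats`. -/
lemma beats_dest {P : LinearOrder M} {r : ℝ} (hr : 0 ≤ r) {s : M → ℝ} {x y : M}
    (hb : beats P r s x y) :
    (msup s ≤ s x * ((1+r)*(1+r)) ∧ msup s ≤ s y * ((1+r)*(1+r)) ∧ P.lt y x) ∨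
    (msup s ≤ s x * ((1+r)*(1+r)) ∧ ∃ w, msup s ≤ s w * ((1+r)*(1+r)) ∧ P.lt w x) ∨
    (msup s ≤ s y * ((1+r)*(1+r)) ∧ ∃ w, msup s ≤ s w * ((1+r)*(1+r)) ∧ P.lt y w) := by
  obtain ⟨s', hs', Q, hlt⟩ := hb
  by_cases hx : ∀ a, s' a ≤ s' x <;> by_cases hy : ∀ a, s' a ≤ s' y
  · rw [outcome_max Q s' x hx, outcome_max Q s' y hy] at hlt
    exact Or.inl ⟨pw_of_max hr hs' hx, pw_of_max hr hs' hy, hlt⟩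
  · -- x maximizer, y not
    obtain ⟨w, hw, hwmax⟩ := outcome_nonmax_spec Q s' y hy
    rw [outcome_max Q s' x hx, hw] at hlt
    exact Or.inr (Or.inl ⟨pw_of_max hr hs' hx, w, pw_of_max hr hs' hwmax, hlt⟩)
  · obtain ⟨w, hw, hwmax⟩ := outcome_nonmax_spec Q s' x hx
    rw [outcome_max Q s' y hy, hw] at hlt
    exact Or.inr (Or.inr ⟨pw_of_max hr hs' hy, w, pw_of_max hr hs' hwmax, hlt⟩)
  · rw [outcome_nonmax_eq Q s' x y hx hy] at hlt
    have h2 := (@lt_iff_le_not_ge M (@PartialOrder.toPreorder M (@LinearOrder.toPartialOrder M P)) _ _).mp hlt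
    exact absurd h2.1 h2.2

end Aux

section Construct

variable {M : Type*} [Fintype M] [Nonempty M]
set_option linter.unusedSectionVars false

lemma construct_core {r : ℝ} (hr : 0 ≤ r) {s : M → ℝ} (hs : ∀ x, 0 ≤ s x)
    (u v : M) (hu : msup s ≤ s u * ((1+r)*(1+r))) (hv : msup s ≤ s v * ((1+r)*(1+r))) :
    ∃ s' : M → ℝ, s' ∈ uncSet s r ∧
      (∀ z, (s z = msup s ∨ z = u ∨ z = v) → s' z = msup s / (1+r)) ∧
      (∀ z, ¬(s z = msup s ∨ z = u ∨ z = v) → s' z = s z / (1+r)) ∧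
      (∀ a, s' a ≤ msup s / (1+r)) := by
  classical
  have hρ : (0:ℝ) < 1 + r := by linarith
  have hρ1 : (1:ℝ) ≤ 1 + r := by linarith
  have hm0 : 0 ≤ msup s := le_trans (hs u) (le_msup s u)
  refine ⟨fun z => if s z = msup s ∨ z = u ∨ z = v then msup s / (1+r) else s z / (1+r),
    ?_, ?_, ?_, ?_⟩
  · intro c
    by_cases h : s c = msup s ∨ c = u ∨ c = v
    · simp only [if_pos h]
      constructor
      · gcongr
        exact le_msup s c
      · rw [div_le_iff₀ hρ]
        rcases h with h | h | h
        · rw [h]; nlinarith [mul_nonneg (mul_nonneg hm0 hr) hr, mul_nonneg hm0 hr]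
        · subst h; nlinarith
        · subst h; nlinarith
    · simp only [if_neg h]
      exact ⟨le_refl _, le_trans (div_le_self (hs c) hρ1)
        (le_mul_of_one_le_right (hs c) hρ1)⟩
  · intro z hz; simp only [if_pos hz]
  · intro z hz; simp only [if_neg hz]
  · intro a
    by_cases h : s a = msup s ∨ a = u ∨ a = v
    · simp only [if_pos h]; exact le_refl _
    · simp only [if_neg h]
      gcongr
      exact le_msup s a

lemma beats_both {P : LinearOrder M} {r : ℝ} (hr : 0 ≤ r) {s : M → ℝ}
    (hs : ∀ x, 0 ≤ s x) {x y : M}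
    (hx : msup s ≤ s x * ((1+r)*(1+r))) (hy : msup s ≤ s y * ((1+r)*(1+r)))
    (hlt : P.lt y x) : beats P r s x y := by
  classical
  obtain ⟨s', hunc, hin, hout, hmax⟩ := construct_core hr hs x y hx hy
  refine ⟨s', hunc, leastOrder x, ?_⟩
  have hx' : ∀ a, s' a ≤ s' x := by rw [hin x (Or.inr (Or.inl rfl))]; exact hmax
  have hy' : ∀ a, s' a ≤ s' y := by rw [hin y (Or.inr (Or.inr rfl))]; exact hmax
  rw [outcome_max _ s' y hy', outcome_max _ s' x hx']
  exact hlt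

lemma beats_third {P : LinearOrder M} {r : ℝ} (hr : 0 ≤ r) {s : M → ℝ}
    (hs : ∀ x, 0 ≤ s x) {x y w : M}
    (hy : msup s ≤ s y * ((1+r)*(1+r))) (hw : msup s ≤ s w * ((1+r)*(1+r)))
    (hlt : P.lt y w) (hx : s x < msup s) (hxy : x ≠ y) (hxw : x ≠ w) :
    beats P r s x y := by
  classical
  have hρ : (0:ℝ) < 1 + r := by linarith
  obtain ⟨s', hunc, hin, hout, hmax⟩ := construct_core hr hs y w hy hw
  refine ⟨s', hunc, leastOrder w, ?_⟩
  have hy' : ∀ a, s' a ≤ s' y := by rw [hin y (Or.inr (Or.inl rfl))]; exact hmax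
  have hw' : ∀ a, s' a ≤ s' w := by rw [hin w (Or.inr (Or.inr rfl))]; exact hmax
  have hxval : s' x = s x / (1+r) := hout x (by push_neg; exact ⟨ne_of_lt hx, hxy, hxw⟩)
  have hxn : ¬ ∀ a, s' a ≤ s' x := by
    intro hcon
    have h1 := hcon y
    rw [hin y (Or.inr (Or.inl rfl)), hxval] at h1
    have h2 : s x / (1+r) < msup s / (1+r) := by gcongr
    linarith
  have hox : outcome (leastOrder w) s' x = w := by
    rw [outcome, if_neg hxn]
    exact min'_leastOrder w _ _ (Finset.mem_filter.mpr ⟨Finset.mem_univ w, hw'⟩)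
  rw [outcome_max _ s' y hy', hox]
  exact hlt

end Construct

section Dominates

variable {M : Type*} [Fintype M] [Nonempty M]
set_option linter.unusedSectionVars false

lemma beats_irrefl (P : LinearOrder M) (r : ℝ) (s : M → ℝ) (x : M) :
    ¬ beats P r s x x := by
  rintro ⟨s', -, Q, hlt⟩
  have h2 := (@lt_iff_le_not_ge M
    (@PartialOrder.toPreorder M (@LinearOrder.toPartialOrder M P)) _ _).mp hlt
  exact h2.2 h2.1

lemma lt_of_ne_not_lt (P : LinearOrder M) {a b : M} (h1 : a ≠ b) (h2 : ¬ P.lt b a) :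
    P.lt a b := by
  letI := P
  exact lt_of_le_of_ne (le_of_not_gt h2) h1

/-- Lemma B': facts about a local-dominance move under the invariant. -/
lemma dominates_facts {P : LinearOrder M} {r : ℝ} (hr : 0 ≤ r) {s : M → ℝ}
    (hs : ∀ x, 0 ≤ s x) {c v : M} (hdom : dominates P r s c v)
    (hinv : ∀ x, P.lt v x → s x * ((1+r)*(1+r)) < msup s) :
    (msup s ≤ s c * ((1+r)*(1+r))) ∧ (s v * ((1+r)*(1+r)) < msup s) ∧
    (∀ x, P.lt c x → s x * ((1+r)*(1+r)) < msup s) := by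
  obtain ⟨hb, hnb⟩ := hdom
  have ht1 : (1:ℝ) ≤ (1+r)*(1+r) := by nlinarith
  have hcP : msup s ≤ s c * ((1+r)*(1+r)) := by
    rcases beats_dest hr hb with ⟨h1, h2, h3⟩ | ⟨h1, -⟩ | ⟨h1, w, hw1, hw2⟩
    · exact absurd h1 (not_le.mpr (hinv c h3))
    · exact h1
    · exact absurd hw1 (not_le.mpr (hinv w hw2))
  have hcv : c ≠ v := by rintro rfl; exact beats_irrefl P r s c hb
  have hnvc : ¬ P.lt v c := fun h => absurd hcP (not_le.mpr (hinv c h))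
  have hcltv : P.lt c v := lt_of_ne_not_lt P hcv hnvc
  have hvnP : s v * ((1+r)*(1+r)) < msup s := by
    by_contra hcon
    push_neg at hcon
    exact hnb (beats_both hr hs hcon hcP hcltv)
  have hsv : s v < msup s := lt_of_le_of_lt (le_mul_of_one_le_right (hs v) ht1) hvnP
  refine ⟨hcP, hvnP, ?_⟩
  intro x hltcx
  by_contra hcon
  push_neg at hcon
  have hvx : v ≠ x := by rintro rfl; exact absurd hcon (not_le.mpr hvnP)
  exact hnb (beats_third hr hs hcP hcon hltcx hsv (Ne.symm hcv) hvx)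

end Dominates

section Step

variable {M : Type*} [Fintype M] [Nonempty M] {I : Type*} [Fintype I]
set_option linter.unusedSectionVars false

lemma score_nonneg (a : I → M) (c : M) : 0 ≤ score a c := Nat.cast_nonneg _

lemma score_le_score {a a' : I → M} {x : M} (h : ∀ i, a' i = x → a i = x) :
    score a' x ≤ score a x := by
  classical
  unfold score
  have : (Finset.univ.filter (fun i => a' i = x)).card ≤
      (Finset.univ.filter (fun i => a i = x)).card := by
    apply Finset.card_le_card
    intro i hi
    exact Finset.mem_filter.mpr ⟨Finset.mem_univ i, h i (Finset.mem_filter.mp hi).2⟩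
  exact_mod_cast this

lemma step_facts (P : I → LinearOrder M) {r : ℝ} (hr : 0 ≤ r)
    {a a' : I → M} (hstep : validStep P (fun _ => r) a a')
    (hΦ : ∀ i x, (P i).lt (a i) x → score a x * ((1+r)*(1+r)) < msup (score a)) :
    (∀ i x, (P i).lt (a' i) x → score a' x * ((1+r)*(1+r)) < msup (score a')) ∧
    msup (score a) ≤ msup (score a') := by
  classical
  set s := score a with hsdef
  have hs : ∀ x, 0 ≤ s x := fun x => Nat.cast_nonneg _
  have ht1 : (1:ℝ) ≤ (1+r)*(1+r) := by nlinarith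
  have ht0 : (0:ℝ) ≤ (1+r)*(1+r) := by nlinarith
  have key : ∀ i, a' i ≠ a i →
      (msup s ≤ s (a' i) * ((1+r)*(1+r))) ∧ (s (a i) * ((1+r)*(1+r)) < msup s) ∧
      (∀ x, (P i).lt (a' i) x → s x * ((1+r)*(1+r)) < msup s) := by
    intro i hne
    rcases hstep i with h | ⟨hD, -⟩
    · exact absurd h hne
    · exact dominates_facts hr hs hD.1 (hΦ i)
  have hup : ∀ x, msup s ≤ s x * ((1+r)*(1+r)) → s x ≤ score a' x := by
    intro x hx
    apply score_le_score
    intro i hi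
    by_cases h : a' i = a i
    · rw [h]; exact hi
    · exfalso
      have h2 := (key i h).2.1
      rw [hi] at h2
      exact absurd hx (not_le.mpr h2)
  have hdown : ∀ x, s x * ((1+r)*(1+r)) < msup s → score a' x ≤ s x := by
    intro x hx
    apply score_le_score
    intro i hi
    by_cases h : a' i = a i
    · rw [← h]; exact hi
    · exfalso
      have h2 := (key i h).1
      rw [hi] at h2
      exact absurd h2 (not_le.mpr hx)
  have hm' : msup s ≤ msup (score a') := by
    obtain ⟨b, hb⟩ := exists_msup s
    have h1 : msup s ≤ s b * ((1+r)*(1+r)) := by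
      rw [hb]; exact le_mul_of_one_le_right (hs b) ht1
    calc msup s = s b := hb
      _ ≤ score a' b := hup b h1
      _ ≤ msup (score a') := le_msup _ b
  refine ⟨?_, hm'⟩
  intro i x hlt
  have hold : s x * ((1+r)*(1+r)) < msup s := by
    by_cases h : a' i = a i
    · rw [h] at hlt; exact hΦ i x hlt
    · exact (key i h).2.2 x hlt
  calc score a' x * ((1+r)*(1+r)) ≤ s x * ((1+r)*(1+r)) :=
        mul_le_mul_of_nonneg_right (hdown x hold) ht0
    _ < msup s := hold
    _ ≤ msup (score a') := hm'

end Step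

/-- Proposition 2(B): with a uniform uncertainty level and a
truthful initial profile, the score of the winner is non-decreasing. -/
theorem winner_score_nondecreasing {M : Type*} [Fintype M] [Nonempty M]
    {I : Type*} [Fintype I]
    (P : I → LinearOrder M) (r : ℝ) (hr : 0 ≤ r)
    (T : ℕ) (a : ℕ → I → M)
    (hsteps : ∀ t < T, validStep P (fun _ => r) (a t) (a (t + 1)))
    (htruth : truthful P (a 0)) :
    ∀ t < T,
      Finset.univ.sup' Finset.univ_nonempty (score (a t)) ≤
        Finset.univ.sup' Finset.univ_nonempty (score (a (t + 1))) := by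
  have hΦall : ∀ n, n ≤ T →
      ∀ i x, (P i).lt (a n i) x →
        score (a n) x * ((1+r)*(1+r)) < msup (score (a n)) := by
    intro n
    induction n with
    | zero =>
      intro _ i x hlt
      have h2 := (@lt_iff_le_not_ge M
        (@PartialOrder.toPreorder M (@LinearOrder.toPartialOrder M (P i))) _ _).mp hlt
      exact absurd (htruth i x) h2.2
    | succ n ih =>
      intro hn
      exact (step_facts P hr (hsteps n (by omega)) (ih (by omega))).1
  intro t ht
  exact (step_facts P hr (hsteps t ht) (hΦall t (le_of_lt ht))).2
end
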